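/- arXiv:quant-ph/9601020 — 4 statements merged into one kernel-verified Lean document; each statement's English description precedes it below -/
import Mathlib

section
/- (Helstrom's minimal error probability.) Let ρ0, ρ1 be density matrices on ℂ^D, let π0, π1 ≥ 0 with π0 + π1 = 1, and set Γ = π1 ρ1 − π0 ρ0, a Hermitian matrix with eigenvalues γ_1,…,γ_D. Then π0 + Σ_{j : γ_j ≤ 0} γ_j is the minimum, over all pairs (E0, E1) of positive semidefinite matrices with E0 + E1 = I, of the error probability π0 · Re tr(ρ0 E1) + π1 · Re tr(ρ1 E0): every such pair gives a value ≥ π0 + Σ_{γ_j ≤ 0} γ_j, and some pair achieves this value. -/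
open Matrix
open scoped ComplexOrder

/-!
Conjugating by the eigenvector unitary `U` of `Γ = π1 ρ1 - π0 ρ0`, the error probability of
`(E0, 1 - E0)` is `π0 + Σ_j γ_j F_jj` with `F = U* E0 U`. Since `0 ≤ E0 ≤ 1`, every diagonal
entry `F_jj` lies in `[0, 1]`, so each term is at least `min γ_j 0`; equality holds for the
spectral projection of `Γ` onto its nonpositive eigenvalues.
-/

namespace Matrix

variable {n 𝕜 : Type*} [DecidableEq n] [RCLike 𝕜]

lemma PosSemidef.re_diag_le_one {E : Matrix n n 𝕜} (h : (1 - E).PosSemidef) (i : n) :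
    RCLike.re (E i i) ≤ 1 := by
  simpa using (RCLike.nonneg_iff.mp (h.diag_nonneg (i := i))).1

variable [Fintype n]

lemma PosSemidef.star_unitary_mul_mul {E : Matrix n n 𝕜} (hE : E.PosSemidef)
    (U : unitaryGroup n 𝕜) : (star (U : Matrix n n 𝕜) * E * U).PosSemidef := by
  rw [star_eq_conjTranspose]
  exact hE.conjTranspose_mul_mul_same _

namespace IsHermitian

variable {A : Matrix n n 𝕜} (hA : A.IsHermitian)

lemma trace_mul_eq_sum_eigenvalues_mul (E : Matrix n n 𝕜) :
    (A * E).trace = ∑ j, (hA.eigenvalues j : 𝕜) *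
      (star (hA.eigenvectorUnitary : Matrix n n 𝕜) * E * hA.eigenvectorUnitary) j j := by
  conv_lhs => rw [hA.spectral_theorem, Unitary.conjStarAlgAut_apply, mul_assoc, mul_assoc,
    trace_mul_comm, mul_assoc, mul_assoc]
  simp [trace, diagonal_mul, mul_assoc]

lemma sum_nonpos_eigenvalues_le_re_trace_mul {E : Matrix n n 𝕜} (hE : E.PosSemidef)
    (hE' : (1 - E).PosSemidef) :
    ∑ j ∈ Finset.univ.filter (fun j => hA.eigenvalues j ≤ 0), hA.eigenvalues j
      ≤ RCLike.re (A * E).trace := by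
  set U := hA.eigenvectorUnitary
  have hF' : (1 - star (U : Matrix n n 𝕜) * E * U).PosSemidef := by
    simpa [mul_sub, sub_mul] using hE'.star_unitary_mul_mul U
  rw [hA.trace_mul_eq_sum_eigenvalues_mul, map_sum, Finset.sum_filter]
  refine Finset.sum_le_sum fun j _ => ?_
  have h0 := (RCLike.nonneg_iff.mp ((hE.star_unitary_mul_mul U).diag_nonneg (i := j))).1
  have h1 := hF'.re_diag_le_one j
  rw [RCLike.re_ofReal_mul]
  split_ifs <;> nlinarith

lemma posSemidef_cfc {f : ℝ → ℝ} (hf : ∀ i, 0 ≤ f (hA.eigenvalues i)) :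
    (hA.cfc f).PosSemidef := by
  rw [IsHermitian.cfc, Unitary.conjStarAlgAut_apply]
  exact (posSemidef_diagonal_iff.mpr fun i => by simpa using hf i).mul_mul_conjTranspose_same _

lemma one_sub_cfc (f : ℝ → ℝ) : 1 - hA.cfc f = hA.cfc (1 - f) := by
  rw [IsHermitian.cfc, IsHermitian.cfc, ← map_one (Unitary.conjStarAlgAut 𝕜 _ _), ← map_sub,
    ← diagonal_one, diagonal_sub]
  congr 2
  ext i
  simp

lemma trace_mul_cfc (f : ℝ → ℝ) :
    (A * hA.cfc f).trace = ∑ j, ((hA.eigenvalues j * f (hA.eigenvalues j) : ℝ) : 𝕜) := by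
  rw [hA.trace_mul_eq_sum_eigenvalues_mul, IsHermitian.cfc, Unitary.conjStarAlgAut_apply]
  simp [mul_assoc, ← mul_assoc _ (hA.eigenvectorUnitary : Matrix n n 𝕜)]

end IsHermitian

end Matrix

lemma weighted_error_eq_add_re_trace_mul {n : Type*} [Fintype n] [DecidableEq n]
    {ρ0 : Matrix n n ℂ} (hρ0 : ρ0.trace = 1) (ρ1 E : Matrix n n ℂ) (π0 π1 : ℝ) :
    π0 * (ρ0 * (1 - E)).trace.re + π1 * (ρ1 * E).trace.re
      = π0 + (((π1 : ℂ) • ρ1 - (π0 : ℂ) • ρ0) * E).trace.re := by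
  simp only [mul_sub, mul_one, sub_mul, smul_mul_assoc, trace_sub, trace_smul, hρ0, smul_eq_mul,
    Complex.sub_re, Complex.one_re, Complex.re_ofReal_mul]
  ring

theorem helstrom_minimal_error_probability_general {D : ℕ}
    (ρ0 ρ1 : Matrix (Fin D) (Fin D) ℂ)
    (hρ0t : ρ0.trace = 1)
    (π0 π1 : ℝ)
    (hΓ : ((π1 : ℂ) • ρ1 - (π0 : ℂ) • ρ0).IsHermitian) :
    (∀ E0 E1 : Matrix (Fin D) (Fin D) ℂ,
        E0.PosSemidef → E1.PosSemidef → E0 + E1 = 1 →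
        π0 + ∑ j ∈ Finset.univ.filter (fun j => hΓ.eigenvalues j ≤ 0), hΓ.eigenvalues j
          ≤ π0 * ((ρ0 * E1).trace).re + π1 * ((ρ1 * E0).trace).re) ∧
    (∃ E0 E1 : Matrix (Fin D) (Fin D) ℂ,
        E0.PosSemidef ∧ E1.PosSemidef ∧ E0 + E1 = 1 ∧
        π0 * ((ρ0 * E1).trace).re + π1 * ((ρ1 * E0).trace).re
          = π0 + ∑ j ∈ Finset.univ.filter (fun j => hΓ.eigenvalues j ≤ 0), hΓ.eigenvalues j) := by
  constructor
  · rintro E0 E1 hE0 hE1 hsum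
    obtain rfl : E1 = 1 - E0 := eq_sub_of_add_eq' hsum
    rw [weighted_error_eq_add_re_trace_mul hρ0t]
    have := hΓ.sum_nonpos_eigenvalues_le_re_trace_mul hE0 hE1
    rw [RCLike.re_to_complex] at this
    linarith
  · set f : ℝ → ℝ := (Set.Iic 0).indicator 1
    have hf : ∀ x, 0 ≤ f x := Set.indicator_nonneg fun _ _ => zero_le_one
    have hf' : ∀ x, 0 ≤ (1 - f) x := fun _ =>
      sub_nonneg.mpr (Set.indicator_apply_le' (fun _ => le_rfl) fun _ => zero_le_one)
    refine ⟨hΓ.cfc f, 1 - hΓ.cfc f, hΓ.posSemidef_cfc fun _ => hf _,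
      hΓ.one_sub_cfc f ▸ hΓ.posSemidef_cfc fun _ => hf' _, add_sub_cancel _ _, ?_⟩
    rw [weighted_error_eq_add_re_trace_mul hρ0t, hΓ.trace_mul_cfc, Complex.re_sum,
      Finset.sum_filter]
    simp [f, Set.indicator_apply]

/-- Helstrom's minimal error probability for distinguishing two density matrices. -/
theorem helstrom_minimal_error_probability {D : ℕ}
    (ρ0 ρ1 : Matrix (Fin D) (Fin D) ℂ)
    (hρ0 : ρ0.PosSemidef) (hρ1 : ρ1.PosSemidef)
    (hρ0t : ρ0.trace = 1) (hρ1t : ρ1.trace = 1)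
    (π0 π1 : ℝ) (hπ0 : 0 ≤ π0) (hπ1 : 0 ≤ π1) (hπ : π0 + π1 = 1)
    (hΓ : ((π1 : ℂ) • ρ1 - (π0 : ℂ) • ρ0).IsHermitian) :
    (∀ E0 E1 : Matrix (Fin D) (Fin D) ℂ,
        E0.PosSemidef → E1.PosSemidef → E0 + E1 = 1 →
        π0 + ∑ j ∈ Finset.univ.filter (fun j => hΓ.eigenvalues j ≤ 0), hΓ.eigenvalues j
          ≤ π0 * ((ρ0 * E1).trace).re + π1 * ((ρ1 * E0).trace).re) ∧
    (∃ E0 E1 : Matrix (Fin D) (Fin D) ℂ,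
        E0.PosSemidef ∧ E1.PosSemidef ∧ E0 + E1 = 1 ∧
        π0 * ((ρ0 * E1).trace).re + π1 * ((ρ1 * E0).trace).re
          = π0 + ∑ j ∈ Finset.univ.filter (fun j => hΓ.eigenvalues j ≤ 0), hΓ.eigenvalues j) :=
  helstrom_minimal_error_probability_general ρ0 ρ1 hρ0t π0 π1 hΓ
end

section
/- Let ρ0, ρ1 be density matrices on ℂ^D and let {E_b}_{b=1}^n be a POVM. Then Σ_{b=1}^n √(Re tr(ρ0 E_b)) · √(Re tr(ρ1 E_b)) ≥ tr √(ρ1^{1/2} ρ0 ρ1^{1/2}). That is, the statistical overlap of the outcome distributions of any quantum measurement is bounded below by the quantum fidelity tr √(ρ1^{1/2} ρ0 ρ1^{1/2}). -/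
open Matrix
open scoped ComplexOrder

namespace Matrix.PosSemidef

/-- The old Mathlib `Matrix.PosSemidef.sqrt` (removed upstream), with its original definition. -/
noncomputable def sqrt {n : Type*} [Fintype n] [DecidableEq n] {A : Matrix n n ℂ}
    (hA : A.PosSemidef) : Matrix n n ℂ :=
  hA.1.eigenvectorUnitary.1 * diagonal ((↑) ∘ (√·) ∘ hA.1.eigenvalues) *
  (star hA.1.eigenvectorUnitary : Matrix n n ℂ)

lemma posSemidef_sqrt {n : Type*} [Fintype n] [DecidableEq n] {A : Matrix n n ℂ}
    (hA : A.PosSemidef) : PosSemidef hA.sqrt := by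
  unfold sqrt
  have h := PosSemidef.mul_mul_conjTranspose_same
    (posSemidef_diagonal_iff (d := (Complex.ofReal ∘ (√·) ∘ hA.1.eigenvalues)).mpr fun i =>
      Complex.zero_le_real.mpr (Real.sqrt_nonneg _))
    (hA.1.eigenvectorUnitary.1 : Matrix n n ℂ)
  simpa [Matrix.star_eq_conjTranspose] using h

end Matrix.PosSemidef

/-- The sandwiched matrix `ρ1^{1/2} ρ0 ρ1^{1/2}` is positive semidefinite. -/
noncomputable def sandwichPosSemidef {D : ℕ} {ρ0 ρ1 : Matrix (Fin D) (Fin D) ℂ}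
    (hρ0 : ρ0.PosSemidef) (hρ1 : ρ1.PosSemidef) :
    (hρ1.sqrt * ρ0 * hρ1.sqrt).PosSemidef := by
  have h := hρ0.mul_mul_conjTranspose_same hρ1.sqrt
  rwa [hρ1.posSemidef_sqrt.isHermitian.eq] at h

/-!
With `Sᵢ = √ρᵢ` and `A = S₀ S₁`, the sandwiched matrix is `Aᴴ A`, and its square root `|A|`
admits a polar decomposition `|A| = B A` with `B Bᴴ ≤ 1`. Inserting `1 = ∑ E_b` gives
`tr |A| = ∑ tr (B S₀ E_b S₁)`. Writing `E_b = F²`, each term is the Hilbert–Schmidt inner product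
of `F S₀` and `F S₁ B`, so by Cauchy–Schwarz it is at most `√tr (ρ₀ E_b) · √tr (F S₁ B Bᴴ S₁ F)`,
and the contraction bound `B Bᴴ ≤ 1` makes the last trace at most `tr (ρ₁ E_b)`.
-/

open scoped MatrixOrder

namespace Matrix

variable {𝕜 n : Type*} [RCLike 𝕜] [Fintype n]

lemma re_trace_mono {A B : Matrix n n 𝕜} (h : A ≤ B) :
    RCLike.re A.trace ≤ RCLike.re B.trace :=
  (RCLike.le_iff_re_im.mp (OrderHomClass.mono (tracePositiveLinearMap n ℝ 𝕜) h)).1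

lemma norm_trace_mul_conjTranspose_le (X Y : Matrix n n 𝕜) :
    ‖(Y * Xᴴ).trace‖ ≤ √(RCLike.re (X * Xᴴ).trace) * √(RCLike.re (Y * Yᴴ).trace) := by
  classical
  -- Mathlib's inner product with weight `1` is `⟪X, Y⟫ = tr (Y * 1 * Xᴴ)`.
  let := (1 : Matrix n n 𝕜).toMatrixSeminormedAddCommGroup PosSemidef.one
  let := (1 : Matrix n n 𝕜).toMatrixInnerProductSpace PosSemidef.one
  have h : ‖(Y * 1 * Xᴴ).trace‖ ≤
      √(RCLike.re (X * 1 * Xᴴ).trace) * √(RCLike.re (Y * 1 * Yᴴ).trace) :=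
    norm_inner_le_norm (𝕜 := 𝕜) X Y
  simpa only [mul_one] using h

variable [DecidableEq n]

lemma conjTranspose_cfcSqrt (A : Matrix n n 𝕜) : (CFC.sqrt A)ᴴ = CFC.sqrt A :=
  (CFC.sqrt_nonneg A).isSelfAdjoint.star_eq

lemma PosSemidef.sqrt_eq_cfcSqrt {A : Matrix n n ℂ} (hA : A.PosSemidef) :
    hA.sqrt = CFC.sqrt A := by
  rw [CFC.sqrt_eq_real_sqrt A hA.nonneg, cfcₙ_eq_cfc, hA.1.cfc_eq, IsHermitian.cfc,
    Unitary.conjStarAlgAut_apply]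
  rfl

lemma exists_contraction_mul_eq_sqrt (A : Matrix n n 𝕜) :
    ∃ B : Matrix n n 𝕜, B * Bᴴ ≤ 1 ∧ CFC.sqrt (Aᴴ * A) = B * A := by
  have hA : 0 ≤ Aᴴ * A := (posSemidef_conjTranspose_mul_self A).nonneg
  have hcont (f : ℝ → ℝ) : ContinuousOn f (spectrum ℝ (Aᴴ * A)) :=
    (Aᴴ * A).finite_real_spectrum.continuousOn f
  -- `P` is the Moore–Penrose pseudo-inverse of `√(Aᴴ A)`, thanks to `(√0)⁻¹ = 0`.
  let P := cfc (fun x : ℝ => (√x)⁻¹) (Aᴴ * A)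
  have hP : Pᴴ = P := (cfc_predicate _ _ : IsSelfAdjoint P).star_eq
  refine ⟨P * Aᴴ, ?_, ?_⟩
  · calc P * Aᴴ * (P * Aᴴ)ᴴ = P * (Aᴴ * A) * P := by
          rw [conjTranspose_mul, conjTranspose_conjTranspose, hP]; simp only [mul_assoc]
      _ = cfc (fun x : ℝ => (√x)⁻¹ * x * (√x)⁻¹) (Aᴴ * A) := by
          rw [cfc_mul _ _ _ (hcont _) (hcont _), cfc_mul _ _ _ (hcont _) (hcont _),
            cfc_id' ℝ (Aᴴ * A)]
      _ ≤ 1 := cfc_le_one _ _ fun x _ => by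
          rw [inv_mul_eq_div, Real.div_sqrt]; exact mul_inv_le_one
  · calc CFC.sqrt (Aᴴ * A) = cfc (fun x : ℝ => (√x)⁻¹ * x) (Aᴴ * A) := by
          simp only [inv_mul_eq_div, Real.div_sqrt]
          rw [CFC.sqrt_eq_real_sqrt _ hA, cfcₙ_eq_cfc]
      _ = P * (Aᴴ * A) := by rw [cfc_mul _ _ _ (hcont _) (hcont _), cfc_id' ℝ (Aᴴ * A)]
      _ = P * Aᴴ * A := (mul_assoc _ _ _).symm

lemma sqrt_mul_mul_sqrt_eq_conjTranspose_mul_self {ρ₀ : Matrix n n 𝕜} (hρ₀ : 0 ≤ ρ₀)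
    (ρ₁ : Matrix n n 𝕜) :
    CFC.sqrt ρ₁ * ρ₀ * CFC.sqrt ρ₁ =
      (CFC.sqrt ρ₀ * CFC.sqrt ρ₁)ᴴ * (CFC.sqrt ρ₀ * CFC.sqrt ρ₁) := by
  rw [conjTranspose_mul, conjTranspose_cfcSqrt, conjTranspose_cfcSqrt]
  simp only [mul_assoc]
  rw [← mul_assoc (CFC.sqrt ρ₀), CFC.sqrt_mul_sqrt_self ρ₀ hρ₀]

lemma re_trace_mul_sqrt_mul_mul_sqrt_le {ρ₀ ρ₁ E B : Matrix n n 𝕜} (hρ₀ : 0 ≤ ρ₀)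
    (hρ₁ : 0 ≤ ρ₁) (hE : 0 ≤ E) (hB : B * Bᴴ ≤ 1) :
    RCLike.re (B * CFC.sqrt ρ₀ * E * CFC.sqrt ρ₁).trace ≤
      √(RCLike.re (ρ₀ * E).trace) * √(RCLike.re (ρ₁ * E).trace) := by
  set F := CFC.sqrt E
  set S₀ := CFC.sqrt ρ₀
  set S₁ := CFC.sqrt ρ₁
  have hF : Fᴴ = F := conjTranspose_cfcSqrt E
  have hS₀ : S₀ᴴ = S₀ := conjTranspose_cfcSqrt ρ₀
  have hS₁ : S₁ᴴ = S₁ := conjTranspose_cfcSqrt ρ₁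
  have hFF : F * F = E := CFC.sqrt_mul_sqrt_self E hE
  have htrace : (B * S₀ * E * S₁).trace = (F * S₁ * B * (F * S₀)ᴴ).trace := by
    rw [trace_mul_comm (F * S₁ * B), conjTranspose_mul, hF, hS₀, ← hFF]
    simp only [mul_assoc]
    rw [trace_mul_comm B]
    simp only [mul_assoc]
  have hX : (F * S₀ * (F * S₀)ᴴ).trace = (ρ₀ * E).trace := by
    rw [conjTranspose_mul, hF, hS₀, ← mul_assoc, mul_assoc F, trace_mul_comm _ F, ← mul_assoc,
      hFF, CFC.sqrt_mul_sqrt_self ρ₀ hρ₀, trace_mul_comm]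
  have hY : F * S₁ * B * (F * S₁ * B)ᴴ ≤ F * ρ₁ * F := by
    calc F * S₁ * B * (F * S₁ * B)ᴴ = (F * S₁) * (B * Bᴴ) * star (F * S₁) := by
          simp only [star_eq_conjTranspose, conjTranspose_mul, mul_assoc]
      _ ≤ (F * S₁) * 1 * star (F * S₁) := star_right_conjugate_le_conjugate hB _
      _ = F * ρ₁ * F := by
          rw [star_eq_conjTranspose, conjTranspose_mul, hF, hS₁, mul_one, mul_assoc F S₁,
            ← mul_assoc S₁, CFC.sqrt_mul_sqrt_self ρ₁ hρ₁, mul_assoc]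
  calc RCLike.re (B * S₀ * E * S₁).trace = RCLike.re (F * S₁ * B * (F * S₀)ᴴ).trace := by
        rw [htrace]
    _ ≤ ‖(F * S₁ * B * (F * S₀)ᴴ).trace‖ := RCLike.re_le_norm _
    _ ≤ _ := norm_trace_mul_conjTranspose_le _ _
    _ ≤ √(RCLike.re (ρ₀ * E).trace) * √(RCLike.re (ρ₁ * E).trace) := by
        rw [hX]
        refine mul_le_mul_of_nonneg_left (Real.sqrt_le_sqrt ?_) (Real.sqrt_nonneg _)
        refine (re_trace_mono hY).trans_eq ?_
        rw [trace_mul_cycle, hFF, trace_mul_comm]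

end Matrix

theorem statistical_overlap_ge_fidelity_general {D n : ℕ}
    (ρ0 ρ1 : Matrix (Fin D) (Fin D) ℂ)
    (hρ0 : ρ0.PosSemidef) (hρ1 : ρ1.PosSemidef)
    (E : Fin n → Matrix (Fin D) (Fin D) ℂ)
    (hE : ∀ b, (E b).PosSemidef) (hEsum : ∑ b, E b = 1) :
    ((sandwichPosSemidef hρ0 hρ1).sqrt).trace.re
      ≤ ∑ b, Real.sqrt (((ρ0 * E b).trace).re) * Real.sqrt (((ρ1 * E b).trace).re) := by
  obtain ⟨B, hB, hpolar⟩ := exists_contraction_mul_eq_sqrt (CFC.sqrt ρ0 * CFC.sqrt ρ1)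
  have hsplit : (sandwichPosSemidef hρ0 hρ1).sqrt =
      ∑ b, B * CFC.sqrt ρ0 * E b * CFC.sqrt ρ1 := by
    rw [PosSemidef.sqrt_eq_cfcSqrt, PosSemidef.sqrt_eq_cfcSqrt hρ1,
      sqrt_mul_mul_sqrt_eq_conjTranspose_mul_self hρ0.nonneg, hpolar, ← Finset.sum_mul,
      ← Finset.mul_sum, hEsum, mul_one, mul_assoc]
  rw [hsplit, trace_sum, Complex.re_sum]
  exact Finset.sum_le_sum fun b _ =>
    re_trace_mul_sqrt_mul_mul_sqrt_le hρ0.nonneg hρ1.nonneg (hE b).nonneg hB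

/-- The statistical overlap of the outcome distributions of any POVM measurement on
two density matrices is bounded below by the quantum fidelity
`tr √(ρ1^{1/2} ρ0 ρ1^{1/2})`. -/
theorem statistical_overlap_ge_fidelity {D n : ℕ}
    (ρ0 ρ1 : Matrix (Fin D) (Fin D) ℂ)
    (hρ0 : ρ0.PosSemidef) (hρ1 : ρ1.PosSemidef)
    (hρ0t : ρ0.trace = 1) (hρ1t : ρ1.trace = 1)
    (E : Fin n → Matrix (Fin D) (Fin D) ℂ)
    (hE : ∀ b, (E b).PosSemidef) (hEsum : ∑ b, E b = 1) :
    ((sandwichPosSemidef hρ0 hρ1).sqrt).trace.re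
      ≤ ∑ b, Real.sqrt (((ρ0 * E b).trace).re) * Real.sqrt (((ρ1 * E b).trace).re) :=
  statistical_overlap_ge_fidelity_general ρ0 ρ1 hρ0 hρ1 E hE hEsum
end

section
/- Let ψ_1,…,ψ_D be linearly independent vectors in ℂ^D and let α_1,…,α_D be strictly positive real numbers such that Σ_{b=1}^D α_b |ψ_b⟩⟨ψ_b| = I (where |ψ_b⟩⟨ψ_b| denotes the rank-one matrix x ↦ ⟨ψ_b, x⟩ ψ_b). Then the vectors ψ_b are mutually orthogonal: ⟨ψ_b, ψ_c⟩ = 0 for all b ≠ c. Equivalently, a family of linearly independent but nonorthogonal vectors admits no resolution of the identity Σ_b α_b |ψ_b⟩⟨ψ_b| = I with positive coefficients α_b. -/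
/-!
Applying `Σ_b α_b |ψ_b⟩⟨ψ_b| = I` to `ψ_c` expands `ψ_c = Σ_b α_b ⟨ψ_b, ψ_c⟩ ψ_b`. By linear
independence the coefficients are unique, so `α_b ⟨ψ_b, ψ_c⟩ = δ_bc`, and `α_b ≠ 0`.
-/

open Matrix

variable {ι n R : Type*} [Fintype ι] [Fintype n] [CommSemiring R]

theorem Matrix.sum_smul_vecMulVec_mulVec (a : ι → R) (u w : ι → n → R) (x : n → R) :
    (∑ b, a b • vecMulVec (u b) (w b)) *ᵥ x = ∑ b, (a b * (w b ⬝ᵥ x)) • u b := by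
  rw [sum_mulVec]
  refine Finset.sum_congr rfl fun b _ => ?_
  rw [smul_mulVec, vecMulVec_mulVec, op_smul_eq_smul, smul_smul]

theorem LinearIndependent.mul_dotProduct_eq_of_sum_smul_vecMulVec_eq_one
    [DecidableEq ι] [DecidableEq n] {a : ι → R} {u w : ι → n → R}
    (hu : LinearIndependent R u) (h : ∑ b, a b • vecMulVec (u b) (w b) = 1) (b c : ι) :
    a b * (w b ⬝ᵥ u c) = if b = c then 1 else 0 := by
  have hc : ∑ b, (a b * (w b ⬝ᵥ u c)) • u b = ∑ b, (if b = c then 1 else 0 : R) • u b := by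
    rw [← sum_smul_vecMulVec_mulVec, h, one_mulVec]
    simp only [ite_smul, one_smul, zero_smul, Finset.sum_ite_eq', Finset.mem_univ, if_true]
  exact Fintype.linearIndependent_iffₛ.mp hu _ _ hc b

/-- If linearly independent vectors `ψ_1, …, ψ_D` in `ℂ^D` admit a resolution of the
identity `Σ_b α_b |ψ_b⟩⟨ψ_b| = I` with strictly positive coefficients `α_b`, then the
vectors `ψ_b` are mutually orthogonal. -/
theorem orthogonal_of_resolution_of_identity {D : ℕ}
    (ψ : Fin D → (Fin D → ℂ)) (α : Fin D → ℝ)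
    (hli : LinearIndependent ℂ ψ) (hα : ∀ b, 0 < α b)
    (hsum : ∑ b, (α b : ℂ) • Matrix.vecMulVec (ψ b) (star (ψ b)) = 1) :
    ∀ b c, b ≠ c → star (ψ b) ⬝ᵥ ψ c = 0 := by
  intro b c hbc
  have hcoeff := hli.mul_dotProduct_eq_of_sum_smul_vecMulVec_eq_one hsum b c
  rw [if_neg hbc] at hcoeff
  exact (mul_eq_zero.mp hcoeff).resolve_left (Complex.ofReal_ne_zero.mpr (hα b).ne')
end

section
/- Let ρ be a positive definite density matrix on ℂ^D, let Δ be a Hermitian D×D matrix, and let L be a Hermitian matrix satisfying the Lyapunov equation ρL + Lρ = 2Δ. Then for every POVM {E_b}_{b=1}^n in which each E_b is nonzero, Σ_{b=1}^n (Re tr(Δ E_b))² / (Re tr(ρ E_b)) ≤ Re tr(Δ L). (The denominators Re tr(ρ E_b) are strictly positive since ρ is positive definite and E_b ≠ 0.) -/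
/-!
The Lyapunov equation turns `Re tr(Δ X)` into `Re tr(ρ L X)` for every Hermitian `X`: the two
halves `tr(ρ L X)` and `tr(L ρ X)` are complex conjugates. Each term of the sum is then bounded by
Cauchy–Schwarz, `Re tr(ρ L E)² ≤ Re tr(ρ E) · Re tr(ρ L E L)`, which is the nonnegativity of the
discriminant of `t ↦ Re tr(ρ (L - t) E (L - t)) ≥ 0`. Summing over the POVM gives
`Re tr(ρ L L) = Re tr(Δ L)`.
-/

open Matrix
open scoped ComplexOrder

namespace Matrix

variable {n 𝕜 : Type*} [Fintype n] [RCLike 𝕜]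

open scoped MatrixOrder in
lemma PosSemidef.trace_mul_nonneg {A B : Matrix n n 𝕜} (hA : A.PosSemidef) (hB : B.PosSemidef) :
    0 ≤ (A * B).trace := by
  classical
  obtain ⟨C, rfl⟩ := CStarAlgebra.nonneg_iff_eq_star_mul_self.mp hB.nonneg
  rw [star_eq_conjTranspose, ← Matrix.mul_assoc, trace_mul_comm, ← Matrix.mul_assoc]
  exact (hA.mul_mul_conjTranspose_same C).trace_nonneg

lemma PosSemidef.re_trace_mul_nonneg {A B : Matrix n n 𝕜} (hA : A.PosSemidef)
    (hB : B.PosSemidef) : 0 ≤ RCLike.re (A * B).trace :=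
  (RCLike.nonneg_iff.mp (hA.trace_mul_nonneg hB)).1

lemma IsHermitian.re_trace_mul_mul_rev {A B C : Matrix n n 𝕜} (hA : A.IsHermitian)
    (hB : B.IsHermitian) (hC : C.IsHermitian) :
    RCLike.re (A * B * C).trace = RCLike.re (C * B * A).trace := by
  rw [← RCLike.conj_re, ← RCLike.star_def, ← trace_conjTranspose, conjTranspose_mul,
    conjTranspose_mul, hA.eq, hB.eq, hC.eq, Matrix.mul_assoc]

lemma re_trace_mul_eq_of_lyapunov {ρ L Δ X : Matrix n n 𝕜} (hρ : ρ.IsHermitian)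
    (hL : L.IsHermitian) (hX : X.IsHermitian) (hLyap : ρ * L + L * ρ = (2 : 𝕜) • Δ) :
    RCLike.re (Δ * X).trace = RCLike.re (ρ * L * X).trace := by
  have hsplit : (Δ * X).trace + (Δ * X).trace = (ρ * L * X).trace + (L * ρ * X).trace := by
    rw [← trace_add, ← add_mul, ← two_smul 𝕜, ← hLyap, add_mul, trace_add]
  have hconj : RCLike.re (L * ρ * X).trace = RCLike.re (ρ * L * X).trace := by
    rw [hL.re_trace_mul_mul_rev hρ hX, trace_mul_cycle ρ]
  have := congrArg RCLike.re hsplit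
  simp only [map_add, hconj] at this
  linarith

lemma PosSemidef.re_trace_mul_sq_le {ρ E L : Matrix n n 𝕜} (hρ : ρ.PosSemidef)
    (hE : E.PosSemidef) (hL : L.IsHermitian) :
    RCLike.re (ρ * L * E).trace ^ 2 ≤
      RCLike.re (ρ * E).trace * RCLike.re (ρ * L * E * L).trace := by
  classical
  have hquad : ∀ t : ℝ, 0 ≤ RCLike.re (ρ * E).trace * (t * t)
      + -2 * RCLike.re (ρ * L * E).trace * t + RCLike.re (ρ * L * E * L).trace := by
    intro t
    set M := L - (t : 𝕜) • 1
    have hM : Mᴴ = M := by simp [M, hL.eq]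
    have hpos := hρ.re_trace_mul_nonneg (hM ▸ hE.conjTranspose_mul_mul_same M)
    have hconj : RCLike.re (ρ * E * L).trace = RCLike.re (ρ * L * E).trace := by
      rw [hρ.isHermitian.re_trace_mul_mul_rev hE.isHermitian hL, trace_mul_cycle L]
    simp only [M, sub_mul, mul_sub, Matrix.smul_mul, Matrix.mul_smul, Matrix.one_mul,
      Matrix.mul_one, trace_sub, trace_smul, map_sub, smul_eq_mul, RCLike.re_ofReal_mul,
      ← Matrix.mul_assoc, hconj] at hpos
    linear_combination hpos
  have := discrim_le_zero hquad
  unfold discrim at this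
  nlinarith

lemma PosSemidef.re_trace_mul_sq_div_le {ρ E L : Matrix n n 𝕜} (hρ : ρ.PosSemidef)
    (hE : E.PosSemidef) (hL : L.IsHermitian) :
    RCLike.re (ρ * L * E).trace ^ 2 / RCLike.re (ρ * E).trace ≤
      RCLike.re (ρ * L * E * L).trace := by
  refine div_le_of_le_mul₀ (hρ.re_trace_mul_nonneg hE) ?_ ?_
  · simpa [Matrix.mul_assoc, hL.eq] using
      hρ.re_trace_mul_nonneg (hE.conjTranspose_mul_mul_same L)
  · simpa [mul_comm] using hρ.re_trace_mul_sq_le hE hL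

end Matrix

theorem fisher_information_le_trace_lyapunov_general {D n : ℕ}
    (ρ Δ L : Matrix (Fin D) (Fin D) ℂ)
    (hρ : ρ.PosDef)
    (hL : L.IsHermitian)
    (hLyap : ρ * L + L * ρ = (2 : ℂ) • Δ)
    (E : Fin n → Matrix (Fin D) (Fin D) ℂ)
    (hE : ∀ b, (E b).PosSemidef) (hEsum : ∑ b, E b = 1) :
    ∑ b, (((Δ * E b).trace).re) ^ 2 / ((ρ * E b).trace).re ≤ ((Δ * L).trace).re := by
  have hlyap (X : Matrix (Fin D) (Fin D) ℂ) (hX : X.IsHermitian) :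
      (Δ * X).trace.re = (ρ * L * X).trace.re :=
    re_trace_mul_eq_of_lyapunov hρ.isHermitian hL hX hLyap
  calc ∑ b, (Δ * E b).trace.re ^ 2 / (ρ * E b).trace.re
      ≤ ∑ b, (ρ * L * E b * L).trace.re := Finset.sum_le_sum fun b _ => by
        rw [hlyap _ (hE b).isHermitian]
        exact hρ.posSemidef.re_trace_mul_sq_div_le (hE b) hL
    _ = (ρ * L * L).trace.re := by
        rw [← Complex.re_sum, ← trace_sum, ← Finset.sum_mul, ← Finset.mul_sum, hEsum,
          Matrix.mul_one]
    _ = (Δ * L).trace.re := (hlyap L hL).symm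

/-- If `L` is a Hermitian solution of the Lyapunov equation `ρL + Lρ = 2Δ` with `ρ` a
positive definite density matrix and `Δ` Hermitian, then for every POVM with nonzero
elements, `Σ_b (Re tr(Δ E_b))² / (Re tr(ρ E_b)) ≤ Re tr(Δ L)`. -/
theorem fisher_information_le_trace_lyapunov {D n : ℕ}
    (ρ Δ L : Matrix (Fin D) (Fin D) ℂ)
    (hρ : ρ.PosDef) (hρt : ρ.trace = 1)
    (hΔ : Δ.IsHermitian) (hL : L.IsHermitian)
    (hLyap : ρ * L + L * ρ = (2 : ℂ) • Δ)
    (E : Fin n → Matrix (Fin D) (Fin D) ℂ)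
    (hE : ∀ b, (E b).PosSemidef) (hEne : ∀ b, E b ≠ 0) (hEsum : ∑ b, E b = 1) :
    ∑ b, (((Δ * E b).trace).re) ^ 2 / ((ρ * E b).trace).re ≤ ((Δ * L).trace).re :=
  fisher_information_le_trace_lyapunov_general ρ Δ L hρ hL hLyap E hE hEsum
end
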